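/- In the one-period setting, suppose Ψ : Ω × ℝ^d → ℝ ∪ {−∞} satisfies Assumption 4.1. Then Ψ^∞(ω,h) ≤ 0 for all ω ∈ Ω and h ∈ ℝ^d, and Φ^∞(h) ≤ inf_{P∈𝔓} E^P[Ψ^∞(h)] ≤ 0 for all h ∈ ℝ^d, where Φ^∞ is the horizon function of Φ(h) := inf_{P∈𝔓} E^P[Ψ(h)]. -/

import Mathlib

open MeasureTheory
open scoped ENNReal

noncomputable section

/-- Conversion `EReal → ℝ≥0∞` (the positive part). -/
def EReal.toENN (x : EReal) : ℝ≥0∞ := if x = ⊤ then ⊤ else ENNReal.ofReal x.toReal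

/-- The horizon function `f^∞(x) = lim_n sup {(1/δ) f(δ y) : δ > n, |x - y| < 1/n}`. -/
def horizon {E : Type*} [NormedAddCommGroup E] [NormedSpace ℝ E]
    (f : E → EReal) (x : E) : EReal :=
  ⨅ n : ℕ, ⨆ (δ : ℝ) (_ : ((n : ℝ) + 1) < δ) (y : E) (_ : ‖x - y‖ < 1 / ((n : ℝ) + 1)),
    ((δ⁻¹ : ℝ) : EReal) * f (δ • y)

/-- The expectation `E^P[g] ∈ ℝ ∪ {−∞}` of a function `g` that is bounded above. -/
def eexp {X : Type*} [MeasurableSpace X] (P : Measure X) (g : X → EReal) : EReal :=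
  ((∫⁻ x, (g x).toENN ∂P : ℝ≥0∞) : EReal) - ((∫⁻ x, (-(g x)).toENN ∂P : ℝ≥0∞) : EReal)

/-- A set is `𝔖`-polar if it is null for every measure in `𝔖`. -/
def IsPolar {X : Type*} [MeasurableSpace X] (𝔖 : Set (Measure X)) (A : Set X) : Prop :=
  ∀ P ∈ 𝔖, P A = 0

/-- A property holds `𝔖`-quasi surely if it holds outside an `𝔖`-polar set. -/
def QuasiSure {X : Type*} [MeasurableSpace X] (𝔖 : Set (Measure X)) (p : X → Prop) : Prop :=
  IsPolar 𝔖 {x | ¬ p x}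

/-- `ℝ^d`. -/
abbrev Rd (d : ℕ) := EuclideanSpace ℝ (Fin d)

/-- Assumption 4.1 of the paper on the one-period objective `Ψ`. -/
structure Assump1P {Ω : Type*} [MeasurableSpace Ω] {d : ℕ} (𝔖 : Set (Measure Ω))
    (Ψ : Ω → Rd d → EReal) (C : ℝ) : Prop where
  usc : ∀ ω, UpperSemicontinuous (Ψ ω)
  meas : Measurable fun p : Ω × Rd d => Ψ p.1 p.2
  noTop : ∀ ω x, Ψ ω x ≠ ⊤
  bdd : ∀ ω x, Ψ ω x ≤ (C : EReal)
  zero : ⊥ < ⨅ P ∈ 𝔖, eexp P fun ω => Ψ ω 0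

/-!
Write `Ψ^∞(h)` as the `limsup` of `δ⁻¹ Ψ(δ y)` as `δ → ∞` and `y → h`. The bound `Ψ ≤ C` gives
`δ⁻¹ Ψ(δ y) ≤ δ⁻¹ C → 0`, so `Ψ^∞ ≤ 0`, and then every `E^P[Ψ^∞(h)] ≤ 0`. For `P ∈ 𝔖` we have
`Φ ≤ E^P[Ψ]`; pulling the positive factor `δ⁻¹` inside the expectation turns
`(E^P[Ψ])^∞ ≤ E^P[Ψ^∞]` into the reverse Fatou inequality `limsup E^P[g_i] ≤ E^P[limsup g_i]` for
functions uniformly bounded above, along the countably generated filter `atTop ×ˢ 𝓝 h`.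
-/

open Filter Topology

section Expectation

variable {X : Type*} [MeasurableSpace X] {P : Measure X}

-- `EReal.toENN` is definitionally Mathlib's `EReal.toENNReal`, whose API is used throughout.
theorem eexp_eq_sub_lintegral (g : X → EReal) :
    eexp P g = ((∫⁻ x, (g x).toENNReal ∂P : ℝ≥0∞) : EReal) - ∫⁻ x, (-g x).toENNReal ∂P := rfl

theorem eexp_mono {g g' : X → EReal} (h : g ≤ g') : eexp P g ≤ eexp P g' := by
  simp only [eexp_eq_sub_lintegral]
  exact EReal.sub_le_sub
    (EReal.coe_ennreal_le_coe_ennreal_iff.2 <| lintegral_mono fun x =>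
      EReal.toENNReal_le_toENNReal (h x))
    (EReal.coe_ennreal_le_coe_ennreal_iff.2 <| lintegral_mono fun x =>
      EReal.toENNReal_le_toENNReal (EReal.neg_le_neg_iff.2 (h x)))

theorem eexp_nonpos {g : X → EReal} (h : g ≤ 0) : eexp P g ≤ 0 := by
  simp [eexp_eq_sub_lintegral, EReal.toENNReal_of_nonpos (h _), EReal.coe_ennreal_nonneg]

theorem eexp_const_mul {r : ℝ} (hr : 0 ≤ r) (g : X → EReal) :
    eexp P (fun x => (r : EReal) * g x) = r * eexp P g := by
  simp only [eexp_eq_sub_lintegral, ← mul_neg, EReal.toENNReal_mul (EReal.coe_nonneg.2 hr),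
    EReal.real_coe_toENNReal, lintegral_const_mul' _ _ ENNReal.ofReal_ne_top,
    EReal.coe_ennreal_mul, EReal.coe_ennreal_ofReal, max_eq_left hr]
  exact (EReal.mul_sub_of_nonneg_of_ne_top (EReal.coe_nonneg.2 hr) (EReal.coe_ne_top r)).symm

end Expectation

section LimsupTransfer

variable {ι : Type*} {l : Filter ι} [l.NeBot]

theorem EReal.limsup_toENNReal (u : ι → EReal) :
    limsup (fun i => (u i).toENNReal) l = (limsup u l).toENNReal :=
  (Monotone.map_limsup_of_continuousAt (fun _ _ => EReal.toENNReal_le_toENNReal) u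
    EReal.continuous_toENNReal.continuousAt).symm

theorem EReal.liminf_toENNReal (u : ι → EReal) :
    liminf (fun i => (u i).toENNReal) l = (liminf u l).toENNReal :=
  (Monotone.map_liminf_of_continuousAt (fun _ _ => EReal.toENNReal_le_toENNReal) u
    EReal.continuous_toENNReal.continuousAt).symm

theorem EReal.limsup_coe_ennreal (u : ι → ℝ≥0∞) :
    limsup (fun i => (u i : EReal)) l = (limsup u l : ℝ≥0∞) :=
  (Monotone.map_limsup_of_continuousAt EReal.coe_ennreal_strictMono.monotone u
    continuous_coe_ennreal_ereal.continuousAt).symm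

theorem EReal.liminf_coe_ennreal (u : ι → ℝ≥0∞) :
    liminf (fun i => (u i : EReal)) l = (liminf u l : ℝ≥0∞) :=
  (Monotone.map_liminf_of_continuousAt EReal.coe_ennreal_strictMono.monotone u
    continuous_coe_ennreal_ereal.continuousAt).symm

end LimsupTransfer

section ReverseFatou

variable {X : Type*} [MeasurableSpace X] {P : Measure X}

/-- Reverse Fatou for the positive parts (dominated by the constant `c⁺`, integrable as `P` is
finite) and Fatou for the negative parts. -/
theorem limsup_eexp_atTop_le [IsFiniteMeasure P] {g : ℕ → X → EReal} {c : ℝ}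
    (hg : ∀ n, Measurable (g n)) (hc : ∀ n x, g n x ≤ c) :
    limsup (fun n => eexp P (g n)) atTop ≤ eexp P fun x => limsup (fun n => g n x) atTop := by
  have hdom : ∀ n x, (g n x).toENNReal ≤ ENNReal.ofReal c := fun n x =>
    EReal.toENNReal_le_toENNReal (hc n x)
  have hfin : ∫⁻ _, ENNReal.ofReal c ∂P ≠ ⊤ := (lintegral_const_lt_top ENNReal.ofReal_ne_top).ne
  have hpos : limsup (fun n => ∫⁻ x, (g n x).toENNReal ∂P) atTop
      ≤ ∫⁻ x, (limsup (fun n => g n x) atTop).toENNReal ∂P := by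
    simp only [← EReal.limsup_toENNReal]
    exact limsup_lintegral_le _ (fun n => (hg n).ereal_toENNReal)
      (fun n => ae_of_all _ (hdom n)) hfin
  have hneg : ∫⁻ x, (-limsup (fun n => g n x) atTop).toENNReal ∂P
      ≤ liminf (fun n => ∫⁻ x, (-g n x).toENNReal ∂P) atTop := by
    simp only [← EReal.liminf_neg, ← EReal.liminf_toENNReal]
    exact lintegral_liminf_le fun n => (hg n).neg.ereal_toENNReal
  set A := fun n => ∫⁻ x, (g n x).toENNReal ∂P
  set B := fun n => ∫⁻ x, (-g n x).toENNReal ∂P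
  have hA : limsup A atTop ≠ ⊤ :=
    ne_top_of_le_ne_top hfin (limsup_le_of_le (h := .of_forall fun n => lintegral_mono (hdom n)))
  have hB : limsup (fun n => -(B n : EReal)) atTop = -((liminf B atTop : ℝ≥0∞) : EReal) := by
    rw [← EReal.liminf_coe_ennreal]
    exact EReal.limsup_neg
  calc limsup (fun n => eexp P (g n)) atTop
      = limsup (fun n => (A n : EReal) + -(B n : EReal)) atTop := by
        simp only [eexp_eq_sub_lintegral, sub_eq_add_neg, A, B]
    _ ≤ limsup (fun n => (A n : EReal)) atTop + limsup (fun n => -(B n : EReal)) atTop :=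
        EReal.limsup_add_le (.inl (by simp [EReal.limsup_coe_ennreal]))
          (.inl (by simpa [EReal.limsup_coe_ennreal] using hA))
    _ ≤ eexp P fun x => limsup (fun n => g n x) atTop := by
        rw [hB, EReal.limsup_coe_ennreal, ← sub_eq_add_neg, eexp_eq_sub_lintegral]
        exact EReal.sub_le_sub (EReal.coe_ennreal_le_coe_ennreal_iff.2 hpos)
          (EReal.coe_ennreal_le_coe_ennreal_iff.2 hneg)

/-- Along a countably generated filter, the reverse Fatou inequality reduces to the sequential
one: every value below the `limsup` is exceeded along a sequence of good indices tending to `l`. -/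
theorem limsup_eexp_le [IsFiniteMeasure P] {ι : Type*} {l : Filter ι} [l.IsCountablyGenerated]
    {g : ι → X → EReal} {c : ℝ} (hg : ∀ᶠ i in l, Measurable (g i) ∧ ∀ x, g i x ≤ c) :
    limsup (fun i => eexp P (g i)) l ≤ eexp P fun x => limsup (fun i => g i x) l := by
  refine le_of_forall_lt_imp_le_of_dense fun a ha => ?_
  obtain ⟨ns, hns, hgood⟩ := exists_seq_forall_of_frequently
    ((frequently_lt_of_lt_limsup (by isBoundedDefault) ha).and_eventually hg)
  calc a ≤ limsup (fun n => eexp P (g (ns n))) atTop :=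
        le_limsup_of_frequently_le (.of_forall fun n => (hgood n).1.le)
    _ ≤ eexp P fun x => limsup (fun n => g (ns n) x) atTop :=
        limsup_eexp_atTop_le (fun n => (hgood n).2.1) (fun n => (hgood n).2.2)
    _ ≤ eexp P fun x => limsup (fun i => g i x) l := eexp_mono fun x =>
        (limsup_comp (g · x) ns atTop).trans_le (limsup_le_limsup_of_le hns)

end ReverseFatou

theorem hasBasis_atTop_prod_nhds {E : Type*} [SeminormedAddCommGroup E] (x : E) :
    (atTop ×ˢ 𝓝 x).HasBasis (fun _ : ℕ => True)
      fun n => Set.Ioi ((n : ℝ) + 1) ×ˢ {y | ‖x - y‖ < 1 / ((n : ℝ) + 1)} := by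
  have hatTop : (atTop : Filter ℝ).HasBasis (fun _ : ℕ => True) fun n => Set.Ioi ((n : ℝ) + 1) :=
    atTop_basis_Ioi.to_hasBasis (fun a _ => ⟨⌈a⌉₊, trivial, Set.Ioi_subset_Ioi <|
      (Nat.le_ceil a).trans (lt_add_one _).le⟩) fun n _ => ⟨_, trivial, subset_rfl⟩
  have hnhds := (Metric.nhds_basis_ball_inv_nat_succ (x := x))
  simp only [Metric.ball, dist_comm _ x, dist_eq_norm_sub] at hnhds
  refine hatTop.prod_same_index_anti hnhds (fun m _ n _ hmn => ?_) fun m _ n _ hmn => ?_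
  · exact Set.Ioi_subset_Ioi (by simpa using hmn)
  · exact fun y (hy : ‖x - y‖ < _) => hy.trans_le (Nat.one_div_le_one_div hmn)

section Horizon

variable {E : Type*} [NormedAddCommGroup E] [NormedSpace ℝ E]

theorem horizon_eq_limsup (f : E → EReal) (x : E) :
    horizon f x =
      limsup (fun p : ℝ × E => ((p.1⁻¹ : ℝ) : EReal) * f (p.1 • p.2)) (atTop ×ˢ 𝓝 x) := by
  simp only [(hasBasis_atTop_prod_nhds x).limsup_eq_iInf_iSup, iInf_true, Set.mem_prod,
    Set.mem_Ioi, Set.mem_ofPred_eq, iSup_prod, iSup_and, horizon]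
  exact iInf_congr fun n => iSup_congr fun δ => iSup_comm

theorem horizon_mono {f g : E → EReal} (h : f ≤ g) (x : E) : horizon f x ≤ horizon g x := by
  simp only [horizon_eq_limsup]
  exact limsup_le_limsup <| ((eventually_gt_atTop 0).prod_inl _).mono fun p hp =>
    mul_le_mul_of_nonneg_left (h _) (EReal.coe_nonneg.2 (inv_nonneg.2 hp.le))

theorem horizon_nonpos_of_forall_le {f : E → EReal} {c : ℝ} (hf : ∀ y, f y ≤ c) (x : E) :
    horizon f x ≤ 0 := by
  have hlim : Tendsto (fun p : ℝ × E => ((p.1⁻¹ * c : ℝ) : EReal)) (atTop ×ˢ 𝓝 x) (𝓝 0) := by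
    have h : Tendsto (fun p : ℝ × E => p.1⁻¹ * c) (atTop ×ˢ 𝓝 x) (𝓝 (0 * c)) :=
      (tendsto_inv_atTop_zero.comp tendsto_fst).mul_const c
    rw [zero_mul] at h
    exact (continuous_coe_real_ereal.tendsto 0).comp h
  rw [horizon_eq_limsup, ← hlim.limsup_eq]
  refine limsup_le_limsup <| ((eventually_gt_atTop 0).prod_inl _).mono fun p hp => ?_
  dsimp only
  rw [EReal.coe_mul]
  exact mul_le_mul_of_nonneg_left (hf _) (EReal.coe_nonneg.2 (inv_nonneg.2 hp.le))

theorem horizon_eexp_le_eexp_horizon {Ω : Type*} [MeasurableSpace Ω] (P : Measure Ω)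
    [IsFiniteMeasure P] {Ψ : Ω → E → EReal} {c : ℝ} (hΨ : ∀ x, Measurable fun ω => Ψ ω x)
    (hc : ∀ ω x, Ψ ω x ≤ c) (x : E) :
    horizon (fun y => eexp P fun ω => Ψ ω y) x ≤ eexp P fun ω => horizon (Ψ ω) x := by
  simp only [horizon_eq_limsup]
  have hδ : ∀ᶠ p : ℝ × E in atTop ×ˢ 𝓝 x, 1 ≤ p.1 := (eventually_ge_atTop 1).prod_inl _
  calc limsup (fun p : ℝ × E => ((p.1⁻¹ : ℝ) : EReal) * eexp P fun ω => Ψ ω (p.1 • p.2))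
        (atTop ×ˢ 𝓝 x)
      = limsup (fun p : ℝ × E => eexp P fun ω => ((p.1⁻¹ : ℝ) : EReal) * Ψ ω (p.1 • p.2))
        (atTop ×ˢ 𝓝 x) := limsup_congr <| hδ.mono fun p hp =>
          (eexp_const_mul (inv_nonneg.2 (zero_le_one.trans hp)) _).symm
    _ ≤ _ := by
      refine limsup_eexp_le (c := max c 0) <| hδ.mono fun p hp =>
        ⟨(hΨ _).const_mul _, fun ω => ?_⟩
      have hinv : 0 ≤ p.1⁻¹ := inv_nonneg.2 (zero_le_one.trans hp)
      calc ((p.1⁻¹ : ℝ) : EReal) * Ψ ω (p.1 • p.2) ≤ ((p.1⁻¹ * max c 0 : ℝ) : EReal) := by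
            rw [EReal.coe_mul]
            exact mul_le_mul_of_nonneg_left ((hc _ _).trans (EReal.coe_le_coe_iff.2
              (le_max_left _ _))) (EReal.coe_nonneg.2 hinv)
        _ ≤ (max c 0 : ℝ) := EReal.coe_le_coe_iff.2 <|
            mul_le_of_le_one_left (le_max_right _ _) (inv_le_one_of_one_le₀ hp)

end Horizon

theorem one_period_horizon_nonpositive_general
    {Ω : Type*} [MeasurableSpace Ω] {d : ℕ}
    (𝔖 : Set (Measure Ω)) (hne : 𝔖.Nonempty) (hprob : ∀ P ∈ 𝔖, IsProbabilityMeasure P)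
    (Ψ : Ω → Rd d → EReal) (C : ℝ) (hΨ : Assump1P 𝔖 Ψ C) :
    (∀ (ω : Ω) (h : Rd d), horizon (Ψ ω) h ≤ 0) ∧
    ∀ h : Rd d,
      horizon (fun h' : Rd d => ⨅ P ∈ 𝔖, eexp P fun ω => Ψ ω h') h ≤
        (⨅ P ∈ 𝔖, eexp P fun ω => horizon (Ψ ω) h) ∧
      (⨅ P ∈ 𝔖, eexp P fun ω => horizon (Ψ ω) h) ≤ 0 := by
  have hΨ_nonpos : ∀ ω h, horizon (Ψ ω) h ≤ 0 := fun ω => horizon_nonpos_of_forall_le (hΨ.bdd ω)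
  refine ⟨hΨ_nonpos, fun h => ⟨le_iInf₂ fun P hP => ?_, ?_⟩⟩
  · have := hprob P hP
    exact (horizon_mono (fun h' => iInf₂_le P hP) h).trans
      (horizon_eexp_le_eexp_horizon P (fun _ => hΨ.meas.of_uncurry_right) hΨ.bdd h)
  · obtain ⟨P, hP⟩ := hne
    exact (iInf₂_le P hP).trans (eexp_nonpos fun ω => hΨ_nonpos ω h)

/-- Lemma 4.4, first part: nonpositivity of the horizon functions `Ψ^∞` and `Φ^∞`. -/
theorem one_period_horizon_nonpositive
    {Ω : Type*} [MeasurableSpace Ω] {d : ℕ} (hd : 1 ≤ d)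
    (𝔖 : Set (Measure Ω)) (hne : 𝔖.Nonempty) (hprob : ∀ P ∈ 𝔖, IsProbabilityMeasure P)
    (Ψ : Ω → Rd d → EReal) (C : ℝ) (hΨ : Assump1P 𝔖 Ψ C) :
    (∀ (ω : Ω) (h : Rd d), horizon (Ψ ω) h ≤ 0) ∧
    ∀ h : Rd d,
      horizon (fun h' : Rd d => ⨅ P ∈ 𝔖, eexp P fun ω => Ψ ω h') h ≤
        (⨅ P ∈ 𝔖, eexp P fun ω => horizon (Ψ ω) h) ∧
      (⨅ P ∈ 𝔖, eexp P fun ω => horizon (Ψ ω) h) ≤ 0 :=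
  one_period_horizon_nonpositive_general 𝔖 hne hprob Ψ C hΨ

end
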